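/- Von Neumann's trace inequality: for real n×n matrices A and B, tr(AᵀB) ≤ Σ_{i=1}^n σ_i(A)·σ_i(B), where σ_1(·) ≥ … ≥ σ_n(·) denote the singular values in nonincreasing order. -/

import Mathlib

/-!
Write `A = U₁ diag(σA) V₁ᵀ` and `B = U₂ diag(σB) V₂ᵀ` (singular value decompositions with the
singular values in the prescribed order). Then `tr(Aᵀ B) = ∑ᵢⱼ σAᵢ σBⱼ Mᵢⱼ Nⱼᵢ` with `M = U₁ᵀ U₂`
and `N = V₂ᵀ V₁` orthogonal, and by AM-GM `Mᵢⱼ Nⱼᵢ ≤ Sᵢⱼ := (Mᵢⱼ² + Nⱼᵢ²) / 2`. The matrix `S` is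
doubly stochastic, so by Birkhoff's theorem `∑ᵢⱼ σAᵢ σBⱼ Sᵢⱼ` is a convex combination of the sums
`∑ᵢ σAᵢ σB_{π i}` over permutations `π`, each of which is at most `∑ᵢ σAᵢ σBᵢ` by the
rearrangement inequality.
-/

open Matrix

/-- The (unordered) singular values of a real square matrix: square roots of the
eigenvalues of `Aᴴ A`. -/
noncomputable def singVals {n : ℕ} (A : Matrix (Fin n) (Fin n) ℝ) : Fin n → ℝ :=
  fun i => Real.sqrt ((show (Aᵀ * A).IsHermitian from Matrix.isHermitian_conjTranspose_mul_self A).eigenvalues i)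

open Finset Module

theorem exists_orthonormalBasis_eq_norm_smul {ι 𝕜 E : Type*} [RCLike 𝕜] [NormedAddCommGroup E]
    [InnerProductSpace 𝕜 E] [FiniteDimensional 𝕜 E] [Fintype ι]
    (hcard : finrank 𝕜 E = Fintype.card ι) {f : ι → E}
    (hf : Pairwise fun i j => inner 𝕜 (f i) (f j) = 0) :
    ∃ u : OrthonormalBasis ι 𝕜 E, ∀ i, f i = (‖f i‖ : 𝕜) • u i := by
  set s : Set ι := {i | f i ≠ 0}
  have hv : Orthonormal 𝕜 (s.domRestrict fun i => (‖f i‖⁻¹ : 𝕜) • f i) := by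
    refine ⟨fun i => norm_smul_inv_norm i.2, fun i j hij => ?_⟩
    simp only [Set.domRestrict_apply, inner_smul_left, inner_smul_right,
      hf (Subtype.coe_injective.ne hij), mul_zero]
  obtain ⟨u, hu⟩ := hv.exists_orthonormalBasis_extension_of_card_eq hcard
  refine ⟨u, fun i => ?_⟩
  by_cases hi : f i = 0
  · simp [hi]
  · rw [hu i hi, smul_smul, mul_inv_cancel₀ (by exact_mod_cast norm_ne_zero_iff.2 hi), one_smul]

theorem Matrix.IsHermitian.inner_toEuclideanLin_eigenvectorBasis {m n : Type*} [Fintype m]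
    [Fintype n] [DecidableEq n] {A : Matrix m n ℝ} (hA : (Aᵀ * A).IsHermitian) (i j : n) :
    inner ℝ (toEuclideanLin A (hA.eigenvectorBasis i)) (toEuclideanLin A (hA.eigenvectorBasis j)) =
      hA.eigenvalues j * inner ℝ (hA.eigenvectorBasis i) (hA.eigenvectorBasis j) := by
  simp only [EuclideanSpace.inner_eq_star_dotProduct, toLpLin_apply, star_trivial]
  rw [dotProduct_mulVec, ← mulVec_transpose, mulVec_mulVec, hA.mulVec_eigenvectorBasis,
    smul_dotProduct, smul_eq_mul]

theorem Matrix.exists_eq_mul_diagonal_mul_transpose_of_singVals {n : ℕ}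
    (A : Matrix (Fin n) (Fin n) ℝ) (σ : Fin n → ℝ)
    (hσ : ∃ e : Equiv.Perm (Fin n), ∀ i, σ i = singVals A (e i)) :
    ∃ U ∈ orthogonalGroup (Fin n) ℝ, ∃ V ∈ orthogonalGroup (Fin n) ℝ,
      A = U * diagonal σ * Vᵀ := by
  obtain ⟨e, rfl⟩ : ∃ e : Equiv.Perm (Fin n), σ = singVals A ∘ e :=
    hσ.imp fun _ he => funext he
  let hA : (Aᵀ * A).IsHermitian := isHermitian_conjTranspose_mul_self A
  obtain ⟨v, hv⟩ : ∃ v : OrthonormalBasis (Fin n) ℝ (EuclideanSpace ℝ (Fin n)),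
      ∀ i, v i = hA.eigenvectorBasis (e i) := ⟨hA.eigenvectorBasis.reindex e.symm, by simp⟩
  have horth : Pairwise fun i j =>
      inner ℝ (toEuclideanLin A (v i)) (toEuclideanLin A (v j)) = 0 := by
    intro i j hij
    rw [hv, hv, hA.inner_toEuclideanLin_eigenvectorBasis,
      hA.eigenvectorBasis.orthonormal.2 (e.injective.ne hij), mul_zero]
  have hnorm (i : Fin n) : ‖toEuclideanLin A (v i)‖ = singVals A (e i) := by
    rw [norm_eq_sqrt_real_inner, hv, hA.inner_toEuclideanLin_eigenvectorBasis,
      real_inner_self_eq_norm_sq, hA.eigenvectorBasis.orthonormal.1, one_pow, mul_one]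
    rfl
  obtain ⟨u, hu⟩ := exists_orthonormalBasis_eq_norm_smul (by simp) horth
  let U := (EuclideanSpace.basisFun (Fin n) ℝ).toBasis.toMatrix u.toBasis
  let V := (EuclideanSpace.basisFun (Fin n) ℝ).toBasis.toMatrix v.toBasis
  have hV : V ∈ orthogonalGroup (Fin n) ℝ :=
    (EuclideanSpace.basisFun _ _).toMatrix_orthonormalBasis_mem_unitary _
  have hAV : A * V = U * diagonal (singVals A ∘ e) := by
    ext k i
    rw [mul_diagonal, mul_apply]
    simpa [V, U, Basis.toMatrix_apply, hnorm, mulVec, dotProduct, mul_comm]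
      using congr_arg (· k) (hu i)
  refine ⟨U, (EuclideanSpace.basisFun _ _).toMatrix_orthonormalBasis_mem_unitary _, V, hV, ?_⟩
  rw [← hAV, mul_assoc, (mem_orthogonalGroup_iff _ _).1 hV, mul_one]

section DoublyStochastic

variable {n R : Type*} [Fintype n] [DecidableEq n] [Field R] [LinearOrder R]
  [IsStrictOrderedRing R]

theorem Matrix.map_sq_mem_doublyStochastic {M : Matrix n n R} (hM : M ∈ orthogonalGroup n R) :
    M.map (· ^ 2) ∈ doublyStochastic R n := by
  refine mem_doublyStochastic_iff_sum.2 ⟨fun i j => sq_nonneg _, fun i => ?_, fun j => ?_⟩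
  · simpa [mul_apply, sq] using congr_fun₂ ((mem_orthogonalGroup_iff _ _).1 hM) i i
  · simpa [mul_apply, sq] using congr_fun₂ ((mem_orthogonalGroup_iff' _ _).1 hM) j j

theorem Matrix.exists_mem_doublyStochastic_trace_diagonal_mul_le {a b : n → R} (ha : 0 ≤ a)
    (hb : 0 ≤ b) {M N : Matrix n n R} (hM : M ∈ orthogonalGroup n R)
    (hN : N ∈ orthogonalGroup n R) :
    ∃ S ∈ doublyStochastic R n, trace (diagonal a * M * diagonal b * N) ≤ a ⬝ᵥ (S *ᵥ b) := by
  set S := (1 / 2 : R) • M.map (· ^ 2) + (1 / 2 : R) • Nᵀ.map (· ^ 2)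
  have hNt : (N.map (· ^ 2))ᵀ ∈ doublyStochastic R n :=
    transpose_mem_doublyStochastic_iff.2 (map_sq_mem_doublyStochastic hN)
  refine ⟨S, convex_doublyStochastic (map_sq_mem_doublyStochastic hM) hNt
    (by norm_num) (by norm_num) (by norm_num), ?_⟩
  calc trace (diagonal a * M * diagonal b * N) = ∑ i, ∑ j, a i * b j * (M i j * N j i) := by
        simp only [trace, diag_apply, mul_apply (N := N), mul_diagonal, diagonal_mul]
        exact sum_congr rfl fun i _ => sum_congr rfl fun j _ => by ring
    _ ≤ ∑ i, ∑ j, a i * b j * S i j := by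
        gcongr with i _ j _
        · exact mul_nonneg (ha i) (hb j)
        · simp only [S, add_apply, smul_apply, map_apply, transpose_apply, smul_eq_mul]
          nlinarith [sq_nonneg (M i j - N j i)]
    _ = a ⬝ᵥ (S *ᵥ b) := by
        simp only [dotProduct, mulVec, mul_sum]
        exact sum_congr rfl fun i _ => sum_congr rfl fun j _ => by ring

theorem Monovary.dotProduct_mulVec_le_of_mem_doublyStochastic {a b : n → R} (hab : Monovary a b)
    {S : Matrix n n R} (hS : S ∈ doublyStochastic R n) :
    a ⬝ᵥ (S *ᵥ b) ≤ a ⬝ᵥ b := by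
  obtain ⟨w, hw0, hw1, rfl⟩ := exists_eq_sum_perm_of_mem_doublyStochastic hS
  calc a ⬝ᵥ ((∑ σ, w σ • σ.permMatrix R) *ᵥ b) = ∑ σ, w σ * (a ⬝ᵥ (b ∘ σ)) := by
        simp_rw [sum_mulVec, smul_mulVec, permMatrix_mulVec, dotProduct_sum, dotProduct_smul,
          smul_eq_mul]
    _ ≤ ∑ σ, w σ * (a ⬝ᵥ b) := by
        gcongr with σ
        · exact hw0 σ
        · exact hab.sum_mul_comp_perm_le_sum_mul
    _ = a ⬝ᵥ b := by rw [← sum_mul, hw1, one_mul]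

end DoublyStochastic

/-- Von Neumann's trace inequality: `tr(Aᵀ B) ≤ Σᵢ σᵢ(A) σᵢ(B)`, where
`σA`, `σB` are the singular values of `A`, `B` arranged in nonincreasing order. -/
theorem vonNeumann_trace_inequality {n : ℕ} (A B : Matrix (Fin n) (Fin n) ℝ)
    (σA σB : Fin n → ℝ)
    (hσA : Antitone σA) (hσB : Antitone σB)
    (hA : ∃ e : Equiv.Perm (Fin n), ∀ i, σA i = singVals A (e i))
    (hB : ∃ e : Equiv.Perm (Fin n), ∀ i, σB i = singVals B (e i)) :
    Matrix.trace (Aᵀ * B) ≤ ∑ i, σA i * σB i := by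
  have hσA₀ : 0 ≤ σA := fun i => hA.elim fun e he => (he i).symm ▸ Real.sqrt_nonneg _
  have hσB₀ : 0 ≤ σB := fun i => hB.elim fun e he => (he i).symm ▸ Real.sqrt_nonneg _
  obtain ⟨U₁, hU₁, V₁, hV₁, rfl⟩ := exists_eq_mul_diagonal_mul_transpose_of_singVals A σA hA
  obtain ⟨U₂, hU₂, V₂, hV₂, rfl⟩ := exists_eq_mul_diagonal_mul_transpose_of_singVals B σB hB
  have hcycle : trace ((U₁ * diagonal σA * V₁ᵀ)ᵀ * (U₂ * diagonal σB * V₂ᵀ)) =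
      trace (diagonal σA * (U₁ᵀ * U₂) * diagonal σB * (V₂ᵀ * V₁)) := by
    simp only [transpose_mul, transpose_transpose, diagonal_transpose, Matrix.mul_assoc]
    rw [trace_mul_comm V₁]
    simp only [Matrix.mul_assoc]
  obtain ⟨S, hS, hle⟩ := exists_mem_doublyStochastic_trace_diagonal_mul_le hσA₀ hσB₀
    (mul_mem (transpose_mem_unitaryGroup_iff.2 hU₁) hU₂)
    (mul_mem (transpose_mem_unitaryGroup_iff.2 hV₂) hV₁)
  rw [hcycle]
  calc _ ≤ σA ⬝ᵥ (S *ᵥ σB) := hle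
    _ ≤ σA ⬝ᵥ σB := (hσA.monovary hσB).dotProduct_mulVec_le_of_mem_doublyStochastic hS
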